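/- (Minimal amplitude and non-concentration for piecewise constant coefficients.) Let N ∈ ℕ, 0 = h_{−1} < h₀ < ⋯ < h_N = H, and let c : [0,H] → ℝ be piecewise constant with c(y) = c_{j+1} ∈ [c_m, c_M] for y ∈ (h_j, h_{j+1}), j = −1, …, N−1; let V := Σ_{j=0}^{N−1} |c_{j+1} − c_j| be its total variation. Fix ε > 0 and μ₁ > 0. Then: (1) there exists r > 0 depending only on ε, c_m, c_M, V, H, μ₁ (in particular not on N or on the partition points) such that for every μ ≥ μ₁, λ ≥ (c_M + ε)μ², and every normalized Dirichlet solution u (with flux v) of the reduced problem, u(y)² + v(y)² ≥ r² for all y ∈ [0,H]; (2) for every interval (a,b) ⊆ (0,H) there exist d > 0 and λ₀ > 0, depending only on b − a, c_m, c_M, ε, V, H, μ₁, such that ∫_a^b u² ≥ d whenever in addition λ > λ₀. -/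

import Mathlib

open MeasureTheory Set Filter Topology

noncomputable section

/-- `u` (with flux `v = c·u'` and weak derivative `g = u'`) is a solution of the reduced
problem `(c u')' + (λ - c μ²) u = 0` on the interval `[a, b]`:
`u` is absolutely continuous with derivative `g ∈ L²`, the flux `v` agrees a.e. with `c·g`,
and `v` is absolutely continuous with derivative `(c μ² - λ)·u`. -/
def IsReducedSolutionOn (a b : ℝ) (c : ℝ → ℝ) (μ lam : ℝ) (u v g : ℝ → ℝ) : Prop :=
  IntervalIntegrable g volume a b ∧
  IntervalIntegrable (fun t => g t ^ 2) volume a b ∧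
  (∀ y ∈ Set.Icc a b, u y = u a + ∫ t in a..y, g t) ∧
  (∀ᵐ y ∂volume.restrict (Set.Ioo a b), v y = c y * g y) ∧
  IntervalIntegrable (fun t => (c t * μ ^ 2 - lam) * u t) volume a b ∧
  (∀ y ∈ Set.Icc a b, v y = v a + ∫ t in a..y, (c t * μ ^ 2 - lam) * u t)

/-- A coefficient on `[0, H]`: measurable and bounded between `cm` and `cM`. -/
def IsCoeff (H cm cM : ℝ) (c : ℝ → ℝ) : Prop :=
  Measurable c ∧ ∀ y ∈ Set.Icc (0 : ℝ) H, cm ≤ c y ∧ c y ≤ cM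

/-!
On a piece where `c ≡ κ`, the energy `v² + κ (λ - κ μ²) u²` of a solution is conserved, and at a
node the weight `κ (λ - κ μ²)` changes at most by the factor `exp (|Δκ| / A)`,
`A = cm ε / (cM + ε)`. Hence the energies of all pieces agree up to the factor `k = exp (V / A)`,
whatever the number of pieces, and `∫ u² = 1` bounds them below by a multiple of `λ`: this is the
minimal amplitude. For non-concentration, integrate the resulting bound `v² ≥ E / k - cM λ u²`
over `(a, b)` and compare with `[u v]ₐᵇ = ∫ₐᵇ (v u' + (c μ² - λ) u²)`; the boundary terms are
`O(E / √λ)`, negligible once `λ` is large.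
-/

open Real

theorem AbsolutelyContinuousOnInterval.congr {f g : ℝ → ℝ} {a b : ℝ}
    (hf : AbsolutelyContinuousOnInterval f a b) (hfg : EqOn f g (uIcc a b)) :
    AbsolutelyContinuousOnInterval g a b := by
  refine Tendsto.congr' ?_ hf
  filter_upwards [mem_inf_of_right (mem_principal_self _)] with E hE
  exact Finset.sum_congr rfl fun i hi => by rw [hfg (hE.1 i hi).1, hfg (hE.1 i hi).2]

section Primitive

variable {f f' : ℝ → ℝ} {a b : ℝ}

theorem absolutelyContinuousOnInterval_of_eq_add_integral (hab : a ≤ b)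
    (hf' : IntervalIntegrable f' volume a b) (hf : ∀ y ∈ Icc a b, f y = f a + ∫ t in a..y, f' t) :
    AbsolutelyContinuousOnInterval f a b :=
  ((LipschitzWith.const (f a)).lipschitzOnWith.absolutelyContinuousOnInterval.fun_add
    (hf'.absolutelyContinuousOnInterval_intervalIntegral left_mem_uIcc)).congr
    fun y hy => (hf y (uIcc_of_le hab ▸ hy)).symm

theorem ae_hasDerivAt_of_eq_add_integral (hf' : IntervalIntegrable f' volume a b)
    (hf : ∀ y ∈ Icc a b, f y = f a + ∫ t in a..y, f' t) :
    ∀ᵐ t, t ∈ Icc a b → HasDerivAt f (f' t) t := by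
  filter_upwards [hf'.ae_hasDerivAt_integral, Ioo_ae_eq_Icc.mem_iff] with t hderiv hIoo ht
  obtain ⟨hat, htb⟩ := hIoo.2 ht
  exact ((hderiv (Icc_subset_uIcc ht) a left_mem_uIcc).const_add (f a)).congr_of_eventuallyEq
    (eventually_of_mem (Icc_mem_nhds hat htb) hf)

theorem eq_add_integral_of_subset {a' b' : ℝ} (hf' : IntervalIntegrable f' volume a b)
    (hf : ∀ y ∈ Icc a b, f y = f a + ∫ t in a..y, f' t) (ha : a ≤ a') (hb : b' ≤ b) :
    ∀ y ∈ Icc a' b', f y = f a' + ∫ t in a'..y, f' t := by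
  intro y hy
  have hya : y ∈ Icc a b := ⟨ha.trans hy.1, hy.2.trans hb⟩
  have ha'a : a' ∈ Icc a b := ⟨ha, hy.1.trans hya.2⟩
  rw [hf y hya, hf a' ha'a, ← intervalIntegral.integral_interval_sub_left
    (hf'.mono_set (uIcc_subset_uIcc left_mem_uIcc (Icc_subset_uIcc hya)))
    (hf'.mono_set (uIcc_subset_uIcc left_mem_uIcc (Icc_subset_uIcc ha'a)))]
  ring

end Primitive

theorem exists_mem_Icc_integral_le_mul {f : ℝ → ℝ} {a b : ℝ} (hab : a ≤ b)
    (hf : ContinuousOn f (Icc a b)) : ∃ y ∈ Icc a b, ∫ t in a..b, f t ≤ (b - a) * f y := by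
  obtain ⟨y, hy, hmax⟩ := isCompact_Icc.exists_isMaxOn (nonempty_Icc.2 hab) hf
  refine ⟨y, hy, ?_⟩
  simpa using intervalIntegral.integral_mono_on (μ := volume) hab
    ((uIcc_of_le hab ▸ hf).intervalIntegrable) intervalIntegrable_const fun t ht => hmax ht

def energyWeight (μ lam κ : ℝ) : ℝ := κ * (lam - κ * μ ^ 2)

namespace IsReducedSolutionOn

variable {a b : ℝ} {c : ℝ → ℝ} {μ lam : ℝ} {u v g : ℝ → ℝ}

theorem mono (hsol : IsReducedSolutionOn a b c μ lam u v g) {a' b' : ℝ} (ha : a ≤ a')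
    (hab : a' ≤ b') (hb : b' ≤ b) : IsReducedSolutionOn a' b' c μ lam u v g := by
  obtain ⟨hg, hg2, hu, hvg, hψ, hv⟩ := hsol
  have hsub : uIcc a' b' ⊆ uIcc a b :=
    uIcc_subset_uIcc (Icc_subset_uIcc ⟨ha, hab.trans hb⟩) (Icc_subset_uIcc ⟨ha.trans hab, hb⟩)
  exact ⟨hg.mono_set hsub, hg2.mono_set hsub, eq_add_integral_of_subset hg hu ha hb,
    ae_restrict_of_ae_restrict_of_subset (Ioo_subset_Ioo ha hb) hvg, hψ.mono_set hsub,
    eq_add_integral_of_subset hψ hv ha hb⟩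

theorem absolutelyContinuousOnInterval_u (hab : a ≤ b)
    (hsol : IsReducedSolutionOn a b c μ lam u v g) : AbsolutelyContinuousOnInterval u a b :=
  absolutelyContinuousOnInterval_of_eq_add_integral hab hsol.1 hsol.2.2.1

theorem absolutelyContinuousOnInterval_v (hab : a ≤ b)
    (hsol : IsReducedSolutionOn a b c μ lam u v g) : AbsolutelyContinuousOnInterval v a b :=
  absolutelyContinuousOnInterval_of_eq_add_integral hab hsol.2.2.2.2.1 hsol.2.2.2.2.2

theorem continuousOn_u (hab : a ≤ b) (hsol : IsReducedSolutionOn a b c μ lam u v g) :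
    ContinuousOn u (Icc a b) :=
  uIcc_of_le hab ▸ (hsol.absolutelyContinuousOnInterval_u hab).continuousOn

theorem continuousOn_v (hab : a ≤ b) (hsol : IsReducedSolutionOn a b c μ lam u v g) :
    ContinuousOn v (Icc a b) :=
  uIcc_of_le hab ▸ (hsol.absolutelyContinuousOnInterval_v hab).continuousOn

theorem ae_hasDerivAt_u (hsol : IsReducedSolutionOn a b c μ lam u v g) :
    ∀ᵐ t, t ∈ Icc a b → HasDerivAt u (g t) t :=
  ae_hasDerivAt_of_eq_add_integral hsol.1 hsol.2.2.1

theorem ae_hasDerivAt_v (hsol : IsReducedSolutionOn a b c μ lam u v g) :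
    ∀ᵐ t, t ∈ Icc a b → HasDerivAt v ((c t * μ ^ 2 - lam) * u t) t :=
  ae_hasDerivAt_of_eq_add_integral hsol.2.2.2.2.1 hsol.2.2.2.2.2

theorem mul_sub_mul_eq_integral (hab : a ≤ b) (hsol : IsReducedSolutionOn a b c μ lam u v g) :
    u b * v b - u a * v a = ∫ t in a..b, (v t * g t + (c t * μ ^ 2 - lam) * u t ^ 2) := by
  rw [← (hsol.absolutelyContinuousOnInterval_u hab).integral_deriv_mul_eq_sub
    (hsol.absolutelyContinuousOnInterval_v hab)]
  refine intervalIntegral.integral_congr_ae ?_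
  filter_upwards [hsol.ae_hasDerivAt_u, hsol.ae_hasDerivAt_v] with t hu' hv' ht
  have ht' : t ∈ Icc a b := uIcc_of_le hab ▸ uIoc_subset_uIcc ht
  rw [(hu' ht').deriv, (hv' ht').deriv]
  ring

theorem energy_eq_of_eqOn {κ : ℝ} (hab : a ≤ b) (hsol : IsReducedSolutionOn a b c μ lam u v g)
    (hc : EqOn c (fun _ => κ) (Ioo a b)) :
    ∀ y ∈ Icc a b, v y ^ 2 + energyWeight μ lam κ * u y ^ 2
      = v a ^ 2 + energyWeight μ lam κ * u a ^ 2 := by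
  have hu := hsol.absolutelyContinuousOnInterval_u hab
  have hv := hsol.absolutelyContinuousOnInterval_v hab
  have hderiv : ∀ᵐ t, t ∈ uIcc a b → HasDerivAt
      (fun y => v y * v y + energyWeight μ lam κ * (u y * u y)) 0 t := by
    rw [uIcc_of_le hab]
    filter_upwards [hsol.ae_hasDerivAt_u, hsol.ae_hasDerivAt_v,
      (ae_restrict_iff' measurableSet_Ioo).1 hsol.2.2.2.1, Ioo_ae_eq_Icc.mem_iff]
      with t hu' hv' hvg hIoo ht
    refine (((hv' ht).mul (hv' ht)).add (((hu' ht).mul (hu' ht)).const_mul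
      (energyWeight μ lam κ))).congr_deriv ?_
    rw [hvg (hIoo.2 ht), hc (hIoo.2 ht), energyWeight]
    ring
  obtain ⟨C, hC⟩ := ((hv.fun_mul hv).fun_add ((hu.fun_mul hu).const_mul
    (energyWeight μ lam κ))).const_of_ae_hasDerivAt_zero hderiv
  intro y hy
  simp only [sq]
  rw [hC y (Icc_subset_uIcc hy), hC a left_mem_uIcc]

theorem integral_sq_div_sub_le {cM : ℝ} (hab : a ≤ b)
    (hsol : IsReducedSolutionOn a b c μ lam u v g)
    (hc : ∀ᵐ t ∂volume.restrict (Icc a b), c t ∈ Ioc 0 cM) :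
    (∫ t in a..b, v t ^ 2) / cM - lam * ∫ t in a..b, u t ^ 2 ≤ u b * v b - u a * v a := by
  have hu := uIcc_of_le hab ▸ hsol.continuousOn_u hab
  have hv := uIcc_of_le hab ▸ hsol.continuousOn_v hab
  have hvg : ∀ᵐ t ∂volume.restrict (Icc a b), v t = c t * g t := by
    rw [← Measure.restrict_congr_set Ioo_ae_eq_Icc]
    exact hsol.2.2.2.1
  have hflux : IntervalIntegrable (fun t => v t * g t) volume a b := hsol.1.continuousOn_mul hv
  have hsource : IntervalIntegrable (fun t => (c t * μ ^ 2 - lam) * u t ^ 2) volume a b := by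
    simpa only [sq, mul_assoc] using hsol.2.2.2.2.1.mul_continuousOn hu
  calc (∫ t in a..b, v t ^ 2) / cM - lam * ∫ t in a..b, u t ^ 2
      = (∫ t in a..b, v t ^ 2 / cM) + ∫ t in a..b, -lam * u t ^ 2 := by
        rw [intervalIntegral.integral_div, intervalIntegral.integral_const_mul]
        ring
    _ ≤ (∫ t in a..b, v t * g t) + ∫ t in a..b, (c t * μ ^ 2 - lam) * u t ^ 2 := by
        gcongr ?_ + ?_
        · refine intervalIntegral.integral_mono_ae_restrict hab
            ((hv.pow 2).div_const _).intervalIntegrable hflux ?_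
          filter_upwards [hvg, hc] with t hvgt hct
          rw [hvgt, div_le_iff₀ (hct.1.trans_le hct.2)]
          nlinarith [mul_le_mul_of_nonneg_right hct.2 (mul_nonneg hct.1.le (sq_nonneg (g t)))]
        · refine intervalIntegral.integral_mono_ae_restrict hab
            ((hu.pow 2).const_mul _).intervalIntegrable hsource ?_
          filter_upwards [hc] with t hct
          nlinarith [mul_nonneg (mul_nonneg hct.1.le (sq_nonneg μ)) (sq_nonneg (u t))]
    _ = u b * v b - u a * v a := by
        rw [← intervalIntegral.integral_add hflux hsource, hsol.mul_sub_mul_eq_integral hab]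

theorem sub_two_mul_integral_sq_le {cM k E : ℝ} (hab : a ≤ b)
    (hsol : IsReducedSolutionOn a b c μ lam u v g)
    (hc : ∀ᵐ t ∂volume.restrict (Icc a b), c t ∈ Ioc 0 cM) (hcM : 0 < cM) (hk : 0 < k)
    (hE : ∀ y ∈ Icc a b, E ≤ k * (v y ^ 2 + cM * lam * u y ^ 2)) :
    (b - a) * E / (k * cM) - 2 * lam * ∫ t in a..b, u t ^ 2 ≤ u b * v b - u a * v a := by
  have hu := uIcc_of_le hab ▸ hsol.continuousOn_u hab
  have hv := uIcc_of_le hab ▸ hsol.continuousOn_v hab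
  have hu2 := (hu.pow 2).intervalIntegrable (μ := volume)
  have hv_sq : (b - a) * (E / k) - cM * lam * ∫ t in a..b, u t ^ 2 ≤ ∫ t in a..b, v t ^ 2 := by
    have := intervalIntegral.integral_mono_on hab
      (intervalIntegrable_const.sub (hu2.const_mul (cM * lam))) (hv.pow 2).intervalIntegrable
      fun y hy => show E / k - cM * lam * u y ^ 2 ≤ v y ^ 2 by
        rw [sub_le_iff_le_add, div_le_iff₀ hk]; linarith [hE y hy]
    rwa [intervalIntegral.integral_sub intervalIntegrable_const (hu2.const_mul _),
      intervalIntegral.integral_const, intervalIntegral.integral_const_mul, smul_eq_mul] at this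
  have hdiv : (b - a) * E / (k * cM) - lam * ∫ t in a..b, u t ^ 2
      ≤ (∫ t in a..b, v t ^ 2) / cM := by
    rw [le_div_iff₀ hcM]
    calc ((b - a) * E / (k * cM) - lam * ∫ t in a..b, u t ^ 2) * cM
        = (b - a) * (E / k) - cM * lam * ∫ t in a..b, u t ^ 2 := by field_simp
      _ ≤ ∫ t in a..b, v t ^ 2 := hv_sq
  linarith [hsol.integral_sq_div_sub_le hab hc]

theorem le_mul_of_forall_energy_le {H : ℝ} (hH : 0 ≤ H)
    (hsol : IsReducedSolutionOn 0 H c μ lam u v g)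
    (hnorm : ∫ y in (0 : ℝ)..H, u y ^ 2 = 1) {B C : ℝ} (hB : 0 ≤ B)
    (hC : ∀ y ∈ Icc 0 H, v y ^ 2 + B * u y ^ 2 ≤ C) : B ≤ C * H := by
  obtain ⟨y, hy, hint⟩ := exists_mem_Icc_integral_le_mul hH
    (f := fun y => u y ^ 2) ((hsol.continuousOn_u hH).pow 2)
  rw [hnorm, sub_zero] at hint
  nlinarith [hC y hy, sq_nonneg (v y), mul_le_mul_of_nonneg_left hint hB]

end IsReducedSolutionOn

section Weight

variable {cm cM ε μ lam : ℝ}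

theorem energyWeight_mem_Icc (hcm : 0 < cm) (hε : 0 < ε) (hlam : (cM + ε) * μ ^ 2 ≤ lam)
    {κ : ℝ} (hκ : κ ∈ Icc cm cM) :
    energyWeight μ lam κ ∈ Icc (cm * ε / (cM + ε) * lam) (cM * lam) := by
  have hκ0 : 0 < κ := hcm.trans_le hκ.1
  have hcMε : 0 < cM + ε := by linarith [hκ.2]
  have hlam0 : 0 ≤ lam := le_trans (by positivity) hlam
  have hgap : ε * lam / (cM + ε) ≤ lam - κ * μ ^ 2 := by
    rw [div_le_iff₀ hcMε]
    nlinarith [mul_le_mul_of_nonneg_right hκ.2 (mul_nonneg (sq_nonneg μ) hcMε.le),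
      mul_le_mul_of_nonneg_left hlam (hκ0.le.trans hκ.2)]
  constructor
  · calc cm * ε / (cM + ε) * lam = cm * (ε * lam / (cM + ε)) := by ring
      _ ≤ κ * (lam - κ * μ ^ 2) := mul_le_mul hκ.1 hgap (by positivity) hκ0.le
  · calc κ * (lam - κ * μ ^ 2) ≤ κ * lam := by
          nlinarith [mul_nonneg (mul_self_nonneg κ) (sq_nonneg μ)]
      _ ≤ cM * lam := mul_le_mul_of_nonneg_right hκ.2 hlam0

theorem energyWeight_nonneg (hcm : 0 < cm) (hε : 0 < ε) (hlam : (cM + ε) * μ ^ 2 ≤ lam)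
    {κ : ℝ} (hκ : κ ∈ Icc cm cM) : 0 ≤ energyWeight μ lam κ := by
  have hκ0 : 0 ≤ κ := hcm.le.trans hκ.1
  have hκμ : κ * μ ^ 2 ≤ lam := by
    nlinarith [mul_le_mul_of_nonneg_right hκ.2 (sq_nonneg μ), mul_nonneg hε.le (sq_nonneg μ)]
  exact mul_nonneg hκ0 (sub_nonneg.2 hκμ)

theorem energyWeight_le_exp_mul (hcm : 0 < cm) (hε : 0 < ε) (hlam : (cM + ε) * μ ^ 2 ≤ lam)
    {x y : ℝ} (hx : x ∈ Icc cm cM) (hy : y ∈ Icc cm cM) :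
    energyWeight μ lam y ≤ exp (|y - x| / (cm * ε / (cM + ε))) * energyWeight μ lam x := by
  have hA : 0 < cm * ε / (cM + ε) := div_pos (mul_pos hcm hε) (by linarith [hx.1.trans hx.2])
  have hWx := energyWeight_mem_Icc hcm hε hlam hx
  have hcMμ : cM * μ ^ 2 ≤ lam := by nlinarith [mul_nonneg hε.le (sq_nonneg μ)]
  have hdiff : energyWeight μ lam y - energyWeight μ lam x ≤ |y - x| * lam := by
    calc energyWeight μ lam y - energyWeight μ lam x = (y - x) * (lam - (x + y) * μ ^ 2) := by
          unfold energyWeight; ring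
      _ ≤ |y - x| * |lam - (x + y) * μ ^ 2| := by rw [← abs_mul]; exact le_abs_self _
      _ ≤ |y - x| * lam := by
          gcongr
          have hx0 : 0 ≤ x := hcm.le.trans hx.1
          have hy0 : 0 ≤ y := hcm.le.trans hy.1
          refine abs_le.2 ⟨?_, ?_⟩ <;>
            nlinarith [mul_le_mul_of_nonneg_right hx.2 (sq_nonneg μ),
              mul_le_mul_of_nonneg_right hy.2 (sq_nonneg μ), mul_nonneg (add_nonneg hx0 hy0)
              (sq_nonneg μ)]
  have hlamW : |y - x| * lam ≤ |y - x| / (cm * ε / (cM + ε)) * energyWeight μ lam x := by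
    rw [div_mul_eq_mul_div, le_div_iff₀ hA]
    nlinarith [mul_le_mul_of_nonneg_left hWx.1 (abs_nonneg (y - x))]
  calc energyWeight μ lam y ≤ (|y - x| / (cm * ε / (cM + ε)) + 1) * energyWeight μ lam x := by
        linarith
    _ ≤ exp (|y - x| / (cm * ε / (cM + ε))) * energyWeight μ lam x :=
        mul_le_mul_of_nonneg_right (add_one_le_exp _) (energyWeight_nonneg hcm hε hlam hx)

end Weight

theorem two_mul_sqrt_mul_abs_mul_le {x y B : ℝ} (hB : 0 ≤ B) :
    2 * √B * |x * y| ≤ y ^ 2 + B * x ^ 2 := by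
  have := two_mul_le_add_sq |y| (√B * |x|)
  rw [mul_pow, sq_sqrt hB, sq_abs, sq_abs, abs_mul] at *
  linarith

theorem le_exp_sum_mul_of_forall_lt {e d : ℕ → ℝ} {n : ℕ}
    (h : ∀ j < n, e (j + 1) ≤ exp (d j) * e j ∧ e j ≤ exp (d j) * e (j + 1)) :
    e n ≤ exp (∑ j ∈ Finset.range n, d j) * e 0 ∧
      e 0 ≤ exp (∑ j ∈ Finset.range n, d j) * e n := by
  induction n with
  | zero => simp
  | succ n ih =>
    obtain ⟨ih₁, ih₂⟩ := ih fun j hj => h j (by omega)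
    obtain ⟨h₁, h₂⟩ := h n (by omega)
    rw [Finset.sum_range_succ, exp_add]
    constructor
    · calc e (n + 1) ≤ exp (d n) * e n := h₁
        _ ≤ exp (d n) * (exp (∑ j ∈ Finset.range n, d j) * e 0) := by gcongr
        _ = _ := by ring
    · calc e 0 ≤ exp (∑ j ∈ Finset.range n, d j) * e n := ih₂
        _ ≤ exp (∑ j ∈ Finset.range n, d j) * (exp (d n) * e (n + 1)) := by gcongr
        _ = _ := by ring

theorem exists_mem_Icc_succ (h : ℕ → ℝ) (n : ℕ) {y : ℝ} (hy : y ∈ Icc (h 0) (h (n + 1))) :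
    ∃ j ≤ n, y ∈ Icc (h j) (h (j + 1)) := by
  induction n with
  | zero => exact ⟨0, le_rfl, hy⟩
  | succ n ih =>
    by_cases hyn : y ≤ h (n + 1)
    · obtain ⟨j, hj, hyj⟩ := ih ⟨hy.1, hyn⟩
      exact ⟨j, by omega, hyj⟩
    · exact ⟨n + 1, le_rfl, (not_le.1 hyn).le, hy.2⟩

structure IsStepCoeff (H cm cM : ℝ) (N : ℕ) (h cv : ℕ → ℝ) (c : ℝ → ℝ) : Prop where
  node_zero : h 0 = 0
  node_last : h (N + 1) = H
  node_lt_succ : ∀ j ≤ N, h j < h (j + 1)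
  value_mem : ∀ j ≤ N, cv j ∈ Icc cm cM
  eqOn_piece : ∀ j ≤ N, EqOn c (fun _ => cv j) (Ioo (h j) (h (j + 1)))

namespace IsStepCoeff

variable {H cm cM : ℝ} {N : ℕ} {h cv : ℕ → ℝ} {c : ℝ → ℝ}

theorem lower_le_upper (hS : IsStepCoeff H cm cM N h cv c) : cm ≤ cM :=
  (hS.value_mem 0 (Nat.zero_le N)).1.trans (hS.value_mem 0 (Nat.zero_le N)).2

theorem node_mono (hS : IsStepCoeff H cm cM N h cv c) {i j : ℕ} (hij : i ≤ j) (hj : j ≤ N + 1) :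
    h i ≤ h j := by
  induction j, hij using Nat.le_induction with
  | base => exact le_rfl
  | succ n _ ih => exact (ih (by omega)).trans (hS.node_lt_succ n (by omega)).le

theorem node_mem_Icc (hS : IsStepCoeff H cm cM N h cv c) {j : ℕ} (hj : j ≤ N + 1) :
    h j ∈ Icc 0 H := by
  rw [← hS.node_zero, ← hS.node_last]
  exact ⟨hS.node_mono (Nat.zero_le j) hj, hS.node_mono hj le_rfl⟩

theorem exists_piece (hS : IsStepCoeff H cm cM N h cv c) {y : ℝ} (hy : y ∈ Icc 0 H) :
    ∃ j ≤ N, y ∈ Icc (h j) (h (j + 1)) :=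
  exists_mem_Icc_succ h N (by rwa [hS.node_zero, hS.node_last])

theorem ae_mem_Icc (hS : IsStepCoeff H cm cM N h cv c) :
    ∀ᵐ t ∂volume.restrict (Icc 0 H), c t ∈ Icc cm cM := by
  have hnodes : ∀ᵐ t, t ∉ h '' Iic (N + 1) :=
    ((finite_Iic _).image h).countable.ae_notMem volume
  filter_upwards [ae_restrict_of_ae hnodes, ae_restrict_mem measurableSet_Icc] with t ht htH
  obtain ⟨j, hj, htj⟩ := hS.exists_piece htH
  have hne : ∀ i ≤ N + 1, h i ≠ t := fun i hi hit => ht ⟨i, mem_Iic.2 hi, hit⟩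
  rw [hS.eqOn_piece j hj ⟨htj.1.lt_of_ne (hne j (by omega)),
    htj.2.lt_of_ne (hne (j + 1) (by omega)).symm⟩]
  exact hS.value_mem j hj

variable {ε μ lam V : ℝ} {u v g : ℝ → ℝ}

theorem energy_eq_on_piece (hS : IsStepCoeff H cm cM N h cv c)
    (hsol : IsReducedSolutionOn 0 H c μ lam u v g) {j : ℕ} (hj : j ≤ N) :
    ∀ y ∈ Icc (h j) (h (j + 1)), v y ^ 2 + energyWeight μ lam (cv j) * u y ^ 2
      = v (h j) ^ 2 + energyWeight μ lam (cv j) * u (h j) ^ 2 :=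
  have hlt := (hS.node_lt_succ j hj).le
  (hsol.mono (hS.node_mem_Icc (by omega)).1 hlt (hS.node_mem_Icc (by omega)).2).energy_eq_of_eqOn
    hlt (hS.eqOn_piece j hj)

theorem energy_succ_le (hS : IsStepCoeff H cm cM N h cv c) (hcm : 0 < cm) (hε : 0 < ε)
    (hlam : (cM + ε) * μ ^ 2 ≤ lam) (hsol : IsReducedSolutionOn 0 H c μ lam u v g)
    {j : ℕ} (hj : j < N) :
    let e := fun i => v (h i) ^ 2 + energyWeight μ lam (cv i) * u (h i) ^ 2
    let d := |cv (j + 1) - cv j| / (cm * ε / (cM + ε))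
    e (j + 1) ≤ exp d * e j ∧ e j ≤ exp d * e (j + 1) := by
  intro e d
  have hnode : e j = v (h (j + 1)) ^ 2 + energyWeight μ lam (cv j) * u (h (j + 1)) ^ 2 :=
    (hS.energy_eq_on_piece hsol hj.le _ (right_mem_Icc.2 (hS.node_lt_succ j hj.le).le)).symm
  have hx := hS.value_mem j hj.le
  have hy := hS.value_mem (j + 1) hj
  have hd : 1 ≤ exp d := one_le_exp (div_nonneg (abs_nonneg _)
    (div_pos (mul_pos hcm hε) (by linarith [hS.lower_le_upper])).le)
  have key : ∀ w w' : ℝ, 0 ≤ w → w' ≤ exp d * w →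
      v (h (j + 1)) ^ 2 + w' * u (h (j + 1)) ^ 2
        ≤ exp d * (v (h (j + 1)) ^ 2 + w * u (h (j + 1)) ^ 2) := fun w w' hw hww => by
    nlinarith [mul_le_mul_of_nonneg_right hww (sq_nonneg (u (h (j + 1)))),
      mul_le_mul_of_nonneg_right hd (sq_nonneg (v (h (j + 1))))]
  have hback := energyWeight_le_exp_mul hcm hε hlam hy hx
  rw [abs_sub_comm] at hback
  rw [hnode]
  exact ⟨key _ _ (energyWeight_nonneg hcm hε hlam hx) (energyWeight_le_exp_mul hcm hε hlam hx hy),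
    key _ _ (energyWeight_nonneg hcm hε hlam hy) hback⟩

theorem exists_energy_bounds (hS : IsStepCoeff H cm cM N h cv c) (hcm : 0 < cm) (hε : 0 < ε)
    (hV : ∑ j ∈ Finset.range N, |cv (j + 1) - cv j| ≤ V)
    (hlam : (cM + ε) * μ ^ 2 ≤ lam) (hsol : IsReducedSolutionOn 0 H c μ lam u v g) :
    ∃ E, ∀ y ∈ Icc 0 H,
      E ≤ exp (V / (cm * ε / (cM + ε))) * (v y ^ 2 + cM * lam * u y ^ 2) ∧
      v y ^ 2 + cm * ε / (cM + ε) * lam * u y ^ 2 ≤ exp (V / (cm * ε / (cM + ε))) * E := by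
  set A := cm * ε / (cM + ε)
  set e := fun i => v (h i) ^ 2 + energyWeight μ lam (cv i) * u (h i) ^ 2
  have he : ∀ i ≤ N, 0 ≤ e i := fun i hi =>
    add_nonneg (sq_nonneg _) (mul_nonneg (energyWeight_nonneg hcm hε hlam (hS.value_mem i hi))
      (sq_nonneg _))
  refine ⟨e 0, fun y hy => ?_⟩
  obtain ⟨j, hj, hyj⟩ := hS.exists_piece hy
  obtain ⟨hej, he0⟩ := le_exp_sum_mul_of_forall_lt (e := e)
    (d := fun i => |cv (i + 1) - cv i| / A) (n := j)
    fun i hi => hS.energy_succ_le hcm hε hlam hsol (by omega)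
  have hA : 0 < A := div_pos (mul_pos hcm hε) (by linarith [hS.lower_le_upper])
  have hsum : ∑ i ∈ Finset.range j, |cv (i + 1) - cv i| / A ≤ V / A := by
    rw [← Finset.sum_div]
    gcongr
    exact (Finset.sum_le_sum_of_subset_of_nonneg (Finset.range_subset_range.2 hj)
      fun _ _ _ => abs_nonneg _).trans hV
  have hW := energyWeight_mem_Icc hcm hε hlam (hS.value_mem j hj)
  have hEy : v y ^ 2 + energyWeight μ lam (cv j) * u y ^ 2 = e j :=
    hS.energy_eq_on_piece hsol hj y hyj
  constructor
  · calc e 0 ≤ exp (∑ i ∈ Finset.range j, |cv (i + 1) - cv i| / A) * e j := he0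
      _ ≤ exp (V / A) * e j := by gcongr; exact he j hj
      _ ≤ exp (V / A) * (v y ^ 2 + cM * lam * u y ^ 2) := by
          rw [← hEy]; gcongr; exact hW.2
  · calc v y ^ 2 + A * lam * u y ^ 2 ≤ e j := by rw [← hEy]; gcongr; exact hW.1
      _ ≤ exp (∑ i ∈ Finset.range j, |cv (i + 1) - cv i| / A) * e 0 := hej
      _ ≤ exp (V / A) * e 0 := by gcongr; exact he 0 (Nat.zero_le N)

theorem div_le_sq_add_sq (hS : IsStepCoeff H cm cM N h cv c) (hcm : 0 < cm) (hε : 0 < ε)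
    (hH : 0 < H) (hV : ∑ j ∈ Finset.range N, |cv (j + 1) - cv j| ≤ V) {μ₁ : ℝ} (hμ₁ : 0 < μ₁)
    (hμ : μ₁ ≤ μ) (hlam : (cM + ε) * μ ^ 2 ≤ lam) (hsol : IsReducedSolutionOn 0 H c μ lam u v g)
    (hnorm : ∫ y in (0 : ℝ)..H, u y ^ 2 = 1) {y : ℝ} (hy : y ∈ Icc 0 H) :
    cm * ε / (cM + ε) / (exp (V / (cm * ε / (cM + ε))) ^ 2 * H * (cM + ((cM + ε) * μ₁ ^ 2)⁻¹))
      ≤ u y ^ 2 + v y ^ 2 := by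
  obtain ⟨E, hE⟩ := hS.exists_energy_bounds hcm hε hV hlam hsol
  set A := cm * ε / (cM + ε)
  set k := exp (V / A)
  have hcM : 0 < cM := hcm.trans_le hS.lower_le_upper
  have hlam₁ : 0 < (cM + ε) * μ₁ ^ 2 := by positivity
  have hlam₁lam : (cM + ε) * μ₁ ^ 2 ≤ lam := le_trans (by gcongr) hlam
  have hlam0 : 0 < lam := hlam₁.trans_le hlam₁lam
  have hlow : A * lam ≤ k * E * H := hsol.le_mul_of_forall_energy_le hH.le hnorm (by positivity)
    fun y hy => (hE y hy).2
  have hAlam : A * lam ≤ k ^ 2 * H * (v y ^ 2 + cM * lam * u y ^ 2) := by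
    nlinarith [mul_le_mul_of_nonneg_left (hE y hy).1 (by positivity : 0 ≤ k * H)]
  rw [div_le_iff₀ (by positivity)]
  calc A = A * lam / lam := by field_simp
    _ ≤ k ^ 2 * H * (v y ^ 2 + cM * lam * u y ^ 2) / lam := by gcongr
    _ = k ^ 2 * H * (v y ^ 2 * lam⁻¹ + cM * u y ^ 2) := by field_simp
    _ ≤ k ^ 2 * H * (v y ^ 2 * ((cM + ε) * μ₁ ^ 2)⁻¹ + cM * u y ^ 2) := by
        gcongr
    _ ≤ (u y ^ 2 + v y ^ 2) * (k ^ 2 * H * (cM + ((cM + ε) * μ₁ ^ 2)⁻¹)) := by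
        have : 0 ≤ k ^ 2 * H * (u y ^ 2 * ((cM + ε) * μ₁ ^ 2)⁻¹ + cM * v y ^ 2) := by positivity
        linarith

theorem div_le_integral_sq (hS : IsStepCoeff H cm cM N h cv c) (hcm : 0 < cm) (hε : 0 < ε)
    (hH : 0 < H) (hV : ∑ j ∈ Finset.range N, |cv (j + 1) - cv j| ≤ V)
    (hlam : (cM + ε) * μ ^ 2 ≤ lam) (hsol : IsReducedSolutionOn 0 H c μ lam u v g)
    (hnorm : ∫ y in (0 : ℝ)..H, u y ^ 2 = 1) {a b : ℝ} (ha : 0 ≤ a) (hab : a < b) (hb : b ≤ H)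
    (hlam₀ : (2 * cM * exp (V / (cm * ε / (cM + ε))) ^ 2 / (b - a)) ^ 2 / (cm * ε / (cM + ε))
      < lam) :
    cm * ε / (cM + ε) * (b - a) / (4 * exp (V / (cm * ε / (cM + ε))) ^ 2 * cM * H)
      ≤ ∫ y in a..b, u y ^ 2 := by
  obtain ⟨E, hE⟩ := hS.exists_energy_bounds hcm hε hV hlam hsol
  set A := cm * ε / (cM + ε)
  set k := exp (V / A)
  set I := ∫ y in a..b, u y ^ 2
  have hcM : 0 < cM := hcm.trans_le hS.lower_le_upper
  have hA : 0 < A := by positivity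
  have hk : 0 < k := exp_pos _
  have hlam0 : 0 < lam := lt_of_le_of_lt (by positivity) hlam₀
  have hlow : A * lam ≤ k * E * H := hsol.le_mul_of_forall_energy_le hH.le hnorm (by positivity)
    fun y hy => (hE y hy).2
  have hE0 : 0 < E := pos_of_mul_pos_right
    (by linarith [mul_pos hA hlam0, mul_right_comm k E H] : 0 < k * H * E) (by positivity)
  have hs : 2 * cM * k ^ 2 < √(A * lam) * (b - a) := by
    rw [← div_lt_iff₀ (sub_pos.2 hab), lt_sqrt (by positivity)]
    exact (div_lt_iff₀' hA).1 hlam₀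
  have hsub : Icc a b ⊆ Icc 0 H := Icc_subset_Icc ha hb
  have hboundary : √(A * lam) * (u b * v b - u a * v a) ≤ k * E := by
    have hb' := two_mul_sqrt_mul_abs_mul_le (x := u b) (y := v b) (B := A * lam) (by positivity)
    have ha' := two_mul_sqrt_mul_abs_mul_le (x := u a) (y := v a) (B := A * lam) (by positivity)
    nlinarith [(hE b (hsub (right_mem_Icc.2 hab.le))).2, (hE a (hsub (left_mem_Icc.2 hab.le))).2,
      mul_le_mul_of_nonneg_left (le_abs_self (u b * v b)) (sqrt_nonneg (A * lam)),
      mul_le_mul_of_nonneg_left (neg_abs_le (u a * v a)) (sqrt_nonneg (A * lam))]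
  have hmain := (hsol.mono ha hab.le hb).sub_two_mul_integral_sq_le hab.le
    (by filter_upwards [ae_restrict_of_ae_restrict_of_subset hsub hS.ae_mem_Icc] with t ht
        using ⟨hcm.trans_le ht.1, ht.2⟩) hcM hk fun y hy => (hE y (hsub hy)).1
  have hsX : 2 * (k * E) < √(A * lam) * ((b - a) * E / (k * cM)) :=
    calc 2 * (k * E) = 2 * cM * k ^ 2 * (E / (k * cM)) := by field_simp
      _ < √(A * lam) * (b - a) * (E / (k * cM)) := by gcongr
      _ = √(A * lam) * ((b - a) * E / (k * cM)) := by ring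
  have hlamI : (b - a) * E / (k * cM) / 4 ≤ lam * I := by
    refine (lt_of_mul_lt_mul_left ?_ (sqrt_nonneg (A * lam))).le
    nlinarith [mul_le_mul_of_nonneg_left hmain (sqrt_nonneg (A * lam))]
  refine le_of_mul_le_mul_left ?_ hlam0
  calc lam * (A * (b - a) / (4 * k ^ 2 * cM * H))
      = A * lam * ((b - a) / (4 * k ^ 2 * cM * H)) := by ring
    _ ≤ k * E * H * ((b - a) / (4 * k ^ 2 * cM * H)) := by gcongr
    _ = (b - a) * E / (k * cM) / 4 := by field_simp
    _ ≤ lam * I := hlamI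

end IsStepCoeff

theorem stmt15_general (cm cM : ℝ) (hcm : 0 < cm) (hcmM : cm < cM)
    (H ε μ₁ V : ℝ) (hH : 0 < H) (hε : 0 < ε) (hμ₁ : 0 < μ₁) :
    (∃ r > (0:ℝ),
      ∀ (N : ℕ) (h : ℕ → ℝ) (cv : ℕ → ℝ) (c : ℝ → ℝ),
        h 0 = 0 → h (N + 1) = H →
        (∀ j ≤ N, h j < h (j + 1)) →
        (∀ j ≤ N, cv j ∈ Set.Icc cm cM) →
        (∀ j ≤ N, ∀ y ∈ Set.Ioo (h j) (h (j + 1)), c y = cv j) →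
        (∑ j ∈ Finset.range N, |cv (j + 1) - cv j|) ≤ V →
        ∀ μ : ℝ, μ₁ ≤ μ → ∀ lam : ℝ, (cM + ε) * μ ^ 2 ≤ lam →
        ∀ u v g : ℝ → ℝ, IsReducedSolutionOn 0 H c μ lam u v g →
        u 0 = 0 → u H = 0 → (∫ y in (0:ℝ)..H, u y ^ 2) = 1 →
        ∀ y ∈ Set.Icc (0 : ℝ) H, r ^ 2 ≤ u y ^ 2 + v y ^ 2) ∧
    (∀ δ > (0:ℝ), ∃ d > (0:ℝ), ∃ lam₀ > (0:ℝ),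
      ∀ (N : ℕ) (h : ℕ → ℝ) (cv : ℕ → ℝ) (c : ℝ → ℝ),
        h 0 = 0 → h (N + 1) = H →
        (∀ j ≤ N, h j < h (j + 1)) →
        (∀ j ≤ N, cv j ∈ Set.Icc cm cM) →
        (∀ j ≤ N, ∀ y ∈ Set.Ioo (h j) (h (j + 1)), c y = cv j) →
        (∑ j ∈ Finset.range N, |cv (j + 1) - cv j|) ≤ V →
        ∀ μ : ℝ, μ₁ ≤ μ → ∀ lam : ℝ, (cM + ε) * μ ^ 2 ≤ lam → lam₀ < lam →
        ∀ u v g : ℝ → ℝ, IsReducedSolutionOn 0 H c μ lam u v g →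
        u 0 = 0 → u H = 0 → (∫ y in (0:ℝ)..H, u y ^ 2) = 1 →
        ∀ a b : ℝ, 0 ≤ a → b ≤ H → b - a = δ →
        d ≤ ∫ y in a..b, u y ^ 2) := by
  have hcM : 0 < cM := hcm.trans hcmM
  have hA : 0 < cm * ε / (cM + ε) := by positivity
  refine ⟨⟨√(cm * ε / (cM + ε) / (exp (V / (cm * ε / (cM + ε))) ^ 2 * H *
      (cM + ((cM + ε) * μ₁ ^ 2)⁻¹))), by positivity, ?_⟩, fun δ hδ =>
    ⟨cm * ε / (cM + ε) * δ / (4 * exp (V / (cm * ε / (cM + ε))) ^ 2 * cM * H), by positivity,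
      (2 * cM * exp (V / (cm * ε / (cM + ε))) ^ 2 / δ) ^ 2 / (cm * ε / (cM + ε)), by positivity,
      ?_⟩⟩
  · intro N h cv c h0 hN hlt hcv hc hV μ hμ lam hlam u v g hsol _ _ hnorm y hy
    rw [sq_sqrt (by positivity)]
    exact IsStepCoeff.div_le_sq_add_sq ⟨h0, hN, hlt, hcv, hc⟩ hcm hε hH hV hμ₁ hμ hlam hsol
      hnorm hy
  · intro N h cv c h0 hN hlt hcv hc hV μ _ lam hlam hlam₀ u v g hsol _ _ hnorm a b ha hb hδab
    subst hδab
    exact IsStepCoeff.div_le_integral_sq ⟨h0, hN, hlt, hcv, hc⟩ hcm hε hH hV hlam hsol hnorm ha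
      (sub_pos.1 hδ) hb hlam₀

/-- minimal amplitude and non-concentration for piecewise constant
coefficients, with constants depending only on `ε, cm, cM, V, H, μ₁` (and `δ = b - a`
for the second part), but not on the number of pieces or the partition. -/
theorem stmt15 (cm cM : ℝ) (hcm : 0 < cm) (hcmM : cm < cM)
    (H ε μ₁ V : ℝ) (hH : 0 < H) (hε : 0 < ε) (hμ₁ : 0 < μ₁) (hV : 0 ≤ V) :
    (∃ r > (0:ℝ),
      ∀ (N : ℕ) (h : ℕ → ℝ) (cv : ℕ → ℝ) (c : ℝ → ℝ),
        h 0 = 0 → h (N + 1) = H →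
        (∀ j ≤ N, h j < h (j + 1)) →
        (∀ j ≤ N, cv j ∈ Set.Icc cm cM) →
        (∀ j ≤ N, ∀ y ∈ Set.Ioo (h j) (h (j + 1)), c y = cv j) →
        (∑ j ∈ Finset.range N, |cv (j + 1) - cv j|) ≤ V →
        ∀ μ : ℝ, μ₁ ≤ μ → ∀ lam : ℝ, (cM + ε) * μ ^ 2 ≤ lam →
        ∀ u v g : ℝ → ℝ, IsReducedSolutionOn 0 H c μ lam u v g →
        u 0 = 0 → u H = 0 → (∫ y in (0:ℝ)..H, u y ^ 2) = 1 →
        ∀ y ∈ Set.Icc (0 : ℝ) H, r ^ 2 ≤ u y ^ 2 + v y ^ 2) ∧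
    (∀ δ > (0:ℝ), ∃ d > (0:ℝ), ∃ lam₀ > (0:ℝ),
      ∀ (N : ℕ) (h : ℕ → ℝ) (cv : ℕ → ℝ) (c : ℝ → ℝ),
        h 0 = 0 → h (N + 1) = H →
        (∀ j ≤ N, h j < h (j + 1)) →
        (∀ j ≤ N, cv j ∈ Set.Icc cm cM) →
        (∀ j ≤ N, ∀ y ∈ Set.Ioo (h j) (h (j + 1)), c y = cv j) →
        (∑ j ∈ Finset.range N, |cv (j + 1) - cv j|) ≤ V →
        ∀ μ : ℝ, μ₁ ≤ μ → ∀ lam : ℝ, (cM + ε) * μ ^ 2 ≤ lam → lam₀ < lam →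
        ∀ u v g : ℝ → ℝ, IsReducedSolutionOn 0 H c μ lam u v g →
        u 0 = 0 → u H = 0 → (∫ y in (0:ℝ)..H, u y ^ 2) = 1 →
        ∀ a b : ℝ, 0 ≤ a → b ≤ H → b - a = δ →
        d ≤ ∫ y in a..b, u y ^ 2) :=
  stmt15_general cm cM hcm hcmM H ε μ₁ V hH hε hμ₁
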